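/- arXiv:2509.03450 — 2 statements merged into one kernel-verified Lean document; each statement's English description precedes it below -/
import Mathlib

section
/- Let p : X ⥤ B be a locally cocartesian fibration and let α : a ⟶ b be a morphism in B. Then the following conditions are equivalent: (1) every weakly cocartesian morphism of X lying over α is strongly cocartesian; (2) for every weakly cocartesian morphism φ : x ⟶ y lying over α, every morphism β : b ⟶ c of B, and every weakly cocartesian morphism ψ : y ⟶ z lying over β, the composite φ ≫ ψ is weakly cocartesian (lying over α ≫ β). (Condition (2) is equivalent to the paper's condition that the canonical map γ_! ⟶ β_! ∘ α_! is an equivalence for every factorization γ = β ∘ α; this is Lemma 3.3.2, a variation of Lurie's Lemma 2.4.2.7.) -/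
open CategoryTheory

/-- Lemma 3.3.2: for a locally cocartesian fibration `p : X ⥤ B` and a morphism `α : a ⟶ b`
of `B`, every weakly cocartesian lift of `α` is strongly cocartesian if and only if the
composite of any weakly cocartesian lift of `α` with any weakly cocartesian lift of any
`β : b ⟶ c` is weakly cocartesian. -/
theorem locallyCocartesian_strong_iff_comp
    {X B : Type*} [Category X] [Category B] (p : X ⥤ B)
    (hp : ∀ {a b : B} (α : a ⟶ b) (x : X), p.obj x = a →
      ∃ (y : X) (φ : x ⟶ y), p.IsCocartesian α φ)
    {a b : B} (α : a ⟶ b) :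
    (∀ {x y : X} (φ : x ⟶ y), p.IsCocartesian α φ → p.IsStronglyCocartesian α φ) ↔
    (∀ {x y : X} (φ : x ⟶ y), p.IsCocartesian α φ →
      ∀ {c : B} (β : b ⟶ c) {z : X} (ψ : y ⟶ z), p.IsCocartesian β ψ →
        p.IsCocartesian (α ≫ β) (φ ≫ ψ)) := by
  constructor
  · intro H x y φ hφ c β z ψ hψ
    have hφs : p.IsStronglyCocartesian α φ := H φ hφ
    refine ⟨?_⟩
    intro w χ hχ
    -- factor χ through φ using strong cocartesianness
    obtain ⟨u, ⟨hu₁, hu₂⟩, huniq⟩ :=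
      Functor.IsStronglyCocartesian.universal_property p α φ β (α ≫ β) rfl χ
    -- factor u through ψ using cocartesianness of ψ
    obtain ⟨v, ⟨hv₁, hv₂⟩, hvuniq⟩ := Functor.IsCocartesian.universal_property (p := p)
      (f := β) (φ := ψ) u
    refine ⟨v, ⟨hv₁, by rw [Category.assoc, hv₂, hu₂]⟩, ?_⟩
    rintro v' ⟨hv'₁, hv'₂⟩
    have hlift : p.IsHomLift β (ψ ≫ v') :=
      CategoryTheory.IsHomLift.comp_lift_id_right' p β ψ c v'
    have : ψ ≫ v' = u := huniq (ψ ≫ v') ⟨hlift, by rw [← Category.assoc]; exact hv'₂⟩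
    exact hvuniq v' ⟨hv'₁, this⟩
  · intro H x y φ hφ
    refine ⟨?_⟩
    intro w β χ hχ
    have hpy : p.obj y = b := CategoryTheory.IsHomLift.codomain_eq p α φ
    obtain ⟨z, ψ, hψ⟩ := hp β y hpy
    have hcomp : p.IsCocartesian (α ≫ β) (φ ≫ ψ) := H φ hφ β ψ hψ
    obtain ⟨v, ⟨hv₁, hv₂⟩, hvuniq⟩ := Functor.IsCocartesian.universal_property (p := p)
      (f := α ≫ β) (φ := φ ≫ ψ) χ
    have hlift : p.IsHomLift β (ψ ≫ v) :=
      CategoryTheory.IsHomLift.comp_lift_id_right' p β ψ (p.obj w) v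
    refine ⟨ψ ≫ v, ⟨hlift, by rw [← Category.assoc]; exact hv₂⟩, ?_⟩
    rintro u' ⟨hu'₁, hu'₂⟩
    obtain ⟨t, ⟨ht₁, ht₂⟩, htuniq⟩ := Functor.IsCocartesian.universal_property (p := p)
      (f := β) (φ := ψ) u'
    have : t = v := hvuniq t ⟨ht₁, by rw [Category.assoc, ht₂, hu'₂]⟩
    rw [← ht₂, this]
end

section
/- Let p : X ⥤ B be a locally cocartesian fibration, α : a ⟶ b a morphism in B, and φ : x ⟶ y a weakly cocartesian morphism lying over α. Assume that for every morphism β : b ⟶ c of B and every weakly cocartesian morphism ψ : y ⟶ z lying over β, the composite φ ≫ ψ is weakly cocartesian. Then φ is strongly cocartesian. (This is the implication (2) ⟹ (1) in Lemma 3.3.2.) -/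
open CategoryTheory

/-- The implication (2) ⟹ (1) of Lemma 3.3.2: in a locally cocartesian fibration, a weakly
cocartesian morphism `φ` lying over `α` whose composites with all weakly cocartesian
morphisms out of its target are again weakly cocartesian is strongly cocartesian. -/
theorem isStronglyCocartesian_of_comp
    {X B : Type*} [Category X] [Category B] (p : X ⥤ B)
    (hp : ∀ {a b : B} (α : a ⟶ b) (x : X), p.obj x = a →
      ∃ (y : X) (φ : x ⟶ y), p.IsCocartesian α φ)
    {a b : B} (α : a ⟶ b) {x y : X} (φ : x ⟶ y) [p.IsCocartesian α φ]
    (h : ∀ {c : B} (β : b ⟶ c) {z : X} (ψ : y ⟶ z), p.IsCocartesian β ψ →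
      p.IsCocartesian (α ≫ β) (φ ≫ ψ)) :
    p.IsStronglyCocartesian α φ := by
  constructor
  intro w g χ hχ
  have hb : p.obj y = b := CategoryTheory.IsHomLift.codomain_eq p α φ
  obtain ⟨z, ψ, hψ⟩ := hp g y hb
  haveI := hψ
  haveI := h g ψ hψ
  obtain ⟨v, ⟨hv1, hv2⟩, hvuniq⟩ :=
    Functor.IsCocartesian.universal_property (p := p) (f := α ≫ g) (φ := φ ≫ ψ) χ
  refine ⟨ψ ≫ v, ⟨?_, by rw [← Category.assoc, hv2]⟩, ?_⟩
  · have : p.IsHomLift (g ≫ 𝟙 (p.obj w)) (ψ ≫ v) := inferInstance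
    simpa using this
  · rintro u ⟨hu1, hu2⟩
    have ht1 : p.IsHomLift (𝟙 (p.obj w)) (Functor.IsCocartesian.map p g ψ u) :=
      inferInstance
    have ht2 : ψ ≫ Functor.IsCocartesian.map p g ψ u = u :=
      Functor.IsCocartesian.fac p g ψ u
    have := hvuniq (Functor.IsCocartesian.map p g ψ u)
      ⟨ht1, by rw [Category.assoc, ht2, hu2]⟩
    rw [← ht2, this]
end
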